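/- For any n, m ∈ ℕ, the restriction to the rectangle S_{n,m} of any colour configuration ξ ∈ {0,1}^{ℤ²} contains either a black vertical crossing of S_{n,m} or a white horizontal *-crossing of S_{n,m}, but never both; in particular, the event V^b_{n,m} equals the complement of the event H^{w*}_{n,m}. -/

import Mathlib

/-!
Common definitions for the Divide-and-Colour (DaC) model of
Bálint, Camia and Meester, "Sharp phase transition and critical
behaviour in 2D divide and colour models".

The model is built concretely: a single uniform random variable on `(0,1]`
is decomposed into countably many i.i.d. uniform random variables (via its
binary digits); one family of uniforms drives the Bernoulli(p) bond
percolation (the edge configuration), and an independent family of uniforms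
attaches an independent Bernoulli(r) colour to each bond cluster (the colour
of a cluster is determined by the uniform label of its canonical
representative, the vertex of minimal encoding).  The DaC measure
`ℙ_{p,r}` is the pushforward of Lebesgue measure on `(0,1]` under the map
producing the pair (edge configuration, colour configuration).
-/

open MeasureTheory ENNReal

namespace DaC

/-- Vertices of the lattice. -/
abbrev V : Type := ℤ × ℤ

/-- Square lattice adjacency: Euclidean distance `1`. -/
def SqAdj (u v : V) : Prop := (u.1 - v.1) ^ 2 + (u.2 - v.2) ^ 2 = 1

/-- `*`-adjacency (matching graph of the square lattice):
Euclidean distance `1` or `√2`. -/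
def StarAdj (u v : V) : Prop :=
  (u.1 - v.1) ^ 2 + (u.2 - v.2) ^ 2 = 1 ∨ (u.1 - v.1) ^ 2 + (u.2 - v.2) ^ 2 = 2

/-- Triangular lattice adjacency. -/
def TriAdj (u v : V) : Prop :=
  (u.1 - v.1, u.2 - v.2) ∈
    ({(1, 0), (-1, 0), (0, 1), (0, -1), (1, 1), (-1, -1)} : Set (ℤ × ℤ))

/-- Classical indicator of a proposition, as a boolean. -/
noncomputable def boolOf (P : Prop) : Bool := @decide P (Classical.propDecidable P)

/-- The `n`-th binary digit of a real number `x ∈ (0,1]`. -/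
noncomputable def bit (n : ℕ) (x : ℝ) : Bool := boolOf (⌊x * 2 ^ (n + 1)⌋ % 2 = 1)

/-- A countable family of i.i.d. uniform random variables on `[0,1]`, extracted
from a single uniform sample `x` by splitting its binary digits. -/
noncomputable def unif (i : ℕ) (x : ℝ) : ℝ :=
  ∑' k : ℕ, if bit (Nat.pair i k) x then ((2 : ℝ)⁻¹) ^ (k + 1) else 0

/-- A symmetric encoding of (unordered) pairs of vertices. -/
noncomputable def eIdx (u v : V) : ℕ :=
  min (Encodable.encode (u, v)) (Encodable.encode (v, u))

/-- The uniform label attached to the edge `{u,v}`. -/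
noncomputable def edgeU (u v : V) (x : ℝ) : ℝ := unif (2 * eIdx u v) x

/-- The uniform label attached to the vertex `v` (independent of the edge labels). -/
noncomputable def vtxU (v : V) (x : ℝ) : ℝ := unif (2 * Encodable.encode v + 1) x

/-- Edge configurations: a boolean (open/closed) for each (ordered) pair of
vertices; configurations arising from the model are symmetric and are
supported on pairs of adjacent vertices. -/
abbrev EdgeCfg : Type := V → V → Bool

/-- Colour configurations: a colour (black = `true`, white = `false`) for each vertex. -/
abbrev ColourCfg : Type := V → Bool

/-- Full configurations of the DaC model: an edge configuration together with
a colour configuration. -/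
abbrev Config : Type := EdgeCfg × ColourCfg

/-- The Bernoulli(p) edge configuration determined by the uniform sample `x`,
on the lattice with adjacency `adj`: an edge `{u,v}` of the lattice is open
iff its uniform label is `< p`. -/
noncomputable def edgeCfg (adj : V → V → Prop) (p : ℝ) (x : ℝ) : EdgeCfg :=
  fun u v => boolOf (adj u v) && boolOf (edgeU u v x < p)

/-- Connectivity through open edges of the edge configuration `η`. -/
def Conn (η : EdgeCfg) (u v : V) : Prop :=
  Relation.ReflTransGen (fun a b => η a b = true) u v

/-- The `p`-cluster of the vertex `v`: its connected component in the graph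
retaining only open edges. -/
def pCluster (η : EdgeCfg) (v : V) : Set V := {w | Conn η v w}

/-- Canonical representative of the `p`-cluster of `v`: the vertex of the
cluster with minimal encoding. -/
noncomputable def clusterRep (η : EdgeCfg) (v : V) : V :=
  (Encodable.decode (α := V) (sInf (Encodable.encode '' pCluster η v))).getD v

/-- The colour configuration with parameters `p, r` determined by the uniform
sample `x`: every `p`-cluster is coloured black (with probability `r`)
or white, independently of all other `p`-clusters, according to the uniform
label of its canonical representative. -/
noncomputable def colourCfg (adj : V → V → Prop) (p r : ℝ) (x : ℝ) : ColourCfg :=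
  fun v => boolOf (vtxU (clusterRep (edgeCfg adj p x) v) x < r)

/-- The uniform sample: Lebesgue measure on `(0,1]`. -/
noncomputable def base : Measure ℝ := volume.restrict (Set.Ioc 0 1)

/-- `ν_p`: the product Bernoulli(p) measure on edge configurations of the
lattice with adjacency `adj`. -/
noncomputable def edgeMeasure (adj : V → V → Prop) (p : ℝ) : Measure EdgeCfg :=
  base.map (edgeCfg adj p)

/-- `ℙ_{p,r}`: the DaC measure on pairs (edge configuration, colour
configuration) for the lattice with adjacency `adj`. -/
noncomputable def DaCMeasure (adj : V → V → Prop) (p r : ℝ) : Measure Config :=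
  base.map (fun x => (edgeCfg adj p x, colourCfg adj p r x))

/-- Monochromatic connectivity: `u` and `v` are joined by a path (for the
adjacency `adj`) all of whose vertices have colour `c`. -/
def MonoConn (adj : V → V → Prop) (ξ : ColourCfg) (c : Bool) (u v : V) : Prop :=
  Relation.ReflTransGen (fun a b => adj a b ∧ ξ a = c ∧ ξ b = c) u v

/-- The colour-`c` cluster of `v` (for the adjacency `adj`): empty if `v` does
not have colour `c`, and otherwise the maximal `adj`-connected set of
`c`-coloured vertices containing `v`. -/
def monoCluster (adj : V → V → Prop) (ξ : ColourCfg) (c : Bool) (v : V) : Set V :=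
  {w | ξ v = c ∧ MonoConn adj ξ c v w}

/-- The origin. -/
def origin : V := (0, 0)

/-- The size (cardinality) of a set of vertices, with values in `ℝ≥0∞`. -/
noncomputable def sizeE (S : Set V) : ℝ≥0∞ := S.encard

/-- The probability, under the DaC measure with edge adjacency `eadj` and
parameters `p, r`, that the origin lies in an infinite colour-`c` cluster for
the adjacency `cadj`. -/
noncomputable def percProb (eadj cadj : V → V → Prop) (c : Bool) (p r : ℝ) : ℝ≥0∞ :=
  DaCMeasure eadj p r {ω | (monoCluster cadj ω.2 c origin).Infinite}

/-- `Θ(p,r)` for the square lattice: probability that the origin lies in an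
infinite black `r`-cluster. -/
noncomputable def thetaSq (p r : ℝ) : ℝ≥0∞ := percProb SqAdj SqAdj true p r

/-- `Θ*(p,s)` for the square lattice: the `ℙ_{p,1-s}`-probability that the
origin lies in an infinite white `*`-cluster. -/
noncomputable def thetaStarSq (p s : ℝ) : ℝ≥0∞ := percProb SqAdj StarAdj false p (1 - s)

/-- `Θ(p,r)` for the triangular lattice. -/
noncomputable def thetaTri (p r : ℝ) : ℝ≥0∞ := percProb TriAdj TriAdj true p r

/-- The critical colouring density `r_c(p)` of the square lattice DaC model. -/
noncomputable def rcSq (p : ℝ) : ℝ :=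
  sSup {r : ℝ | r ∈ Set.Icc (0 : ℝ) 1 ∧ thetaSq p r = 0}

/-- The critical colouring density `r_c*(p)` for white `*`-percolation. -/
noncomputable def rcStarSq (p : ℝ) : ℝ :=
  sSup {s : ℝ | s ∈ Set.Icc (0 : ℝ) 1 ∧ thetaStarSq p s = 0}

/-- The critical colouring density `r_c(p)` of the triangular lattice DaC model. -/
noncomputable def rcTri (p : ℝ) : ℝ :=
  sSup {r : ℝ | r ∈ Set.Icc (0 : ℝ) 1 ∧ thetaTri p r = 0}

/-! ### Rectangles and crossings -/

/-- The rectangle `S_{n,m} = ([0,n] × [0,m]) ∩ ℤ²`. -/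
def Rect (n m : ℕ) : Set V :=
  {v | 0 ≤ v.1 ∧ v.1 ≤ (n : ℤ) ∧ 0 ≤ v.2 ∧ v.2 ≤ (m : ℤ)}

/-- The top side of `S_{n,m}`. -/
def TopSide (n m : ℕ) : Set V := {v | v ∈ Rect n m ∧ v.2 = (m : ℤ)}

/-- The bottom side of `S_{n,m}`. -/
def BotSide (n m : ℕ) : Set V := {v | v ∈ Rect n m ∧ v.2 = 0}

/-- The left side of `S_{n,m}`. -/
def LeftSide (n m : ℕ) : Set V := {v | v ∈ Rect n m ∧ v.1 = 0}

/-- The right side of `S_{n,m}`. -/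
def RightSide (n m : ℕ) : Set V := {v | v ∈ Rect n m ∧ v.1 = (n : ℤ)}

/-- There is a path (for the adjacency `adj`), all of whose vertices lie in the
region `R` and satisfy the predicate `good`, from the set `A` to the set `B`. -/
def HasCrossing (adj : V → V → Prop) (good : V → Prop) (R A B : Set V) : Prop :=
  ∃ (k : ℕ) (f : Fin (k + 1) → V),
    (∀ i, f i ∈ R ∧ good (f i)) ∧
    (∀ i : Fin k, adj (f i.castSucc) (f i.succ)) ∧
    f 0 ∈ A ∧ f (Fin.last k) ∈ B

/-- `V^b_{n,m}` as a set of colour configurations: there is a black vertical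
crossing of `S_{n,m}` (for the adjacency `adj`). -/
def VertBC (adj : V → V → Prop) (n m : ℕ) : Set ColourCfg :=
  {ξ | HasCrossing adj (fun v => ξ v = true) (Rect n m) (TopSide n m) (BotSide n m)}

/-- `V^{w*}_{n,m}` as a set of colour configurations: there is a white vertical
`*`-crossing of `S_{n,m}`. -/
def VertWStarC (n m : ℕ) : Set ColourCfg :=
  {ξ | HasCrossing StarAdj (fun v => ξ v = false) (Rect n m) (TopSide n m) (BotSide n m)}

/-- `H^{w*}_{n,m}` as a set of colour configurations: there is a white
horizontal `*`-crossing of `S_{n,m}`. -/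
def HorizWStarC (n m : ℕ) : Set ColourCfg :=
  {ξ | HasCrossing StarAdj (fun v => ξ v = false) (Rect n m) (LeftSide n m) (RightSide n m)}

/-- The event (set of full configurations) determined by a set of colour
configurations. -/
def colourEvent (C : Set ColourCfg) : Set Config := {ω | ω.2 ∈ C}

/-! ### Events depending on colours, increasing events, pivotal clusters -/

/-- The event `A` is defined in terms of the colours of the vertices in `W`. -/
def DependsOnColoursIn (A : Set Config) (W : Set V) : Prop :=
  ∀ ω ω' : Config, (∀ v ∈ W, ω.2 v = ω'.2 v) → (ω ∈ A ↔ ω' ∈ A)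

/-- The event `A` is increasing (for the partial order comparing colour
configurations pointwise, black = `true` above white = `false`). -/
def IncreasingColourEvent (A : Set Config) : Prop :=
  ∀ ω ω' : Config, (∀ v : V, ω.2 v = true → ω'.2 v = true) → ω ∈ A → ω' ∈ A

/-- Flip the colours of the vertices of `C`. -/
noncomputable def flipOn (C : Set V) (ξ : ColourCfg) : ColourCfg :=
  fun v => @ite _ (v ∈ C) (Classical.propDecidable _) (!ξ v) (ξ v)

/-- The set `C` is a pivotal `p`-cluster for the event `A` in the
configuration `ω`: `C` is a `p`-cluster of the edge configuration of `ω`, and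
flipping the colour of (all the vertices of) `C` changes whether the
configuration belongs to `A`. -/
def IsPivotal (A : Set Config) (ω : Config) (C : Set V) : Prop :=
  (∃ v : V, C = pCluster ω.1 v) ∧ ¬ (ω ∈ A ↔ (ω.1, flipOn C ω.2) ∈ A)

/-- `n(A)`: the number of pivotal `p`-clusters for the event `A`, with values
in `ℝ≥0∞`. -/
noncomputable def numPivotal (A : Set Config) (ω : Config) : ℝ≥0∞ :=
  {C : Set V | IsPivotal A ω C}.encard

/-! ### Barriers -/

/-- Connectivity in the square lattice avoiding the edges of `E`. -/
def AvoidConn (E : Set (V × V)) (u v : V) : Prop :=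
  Relation.ReflTransGen (fun a b => SqAdj a b ∧ (a, b) ∉ E ∧ (b, a) ∉ E) u v

/-- `E` is a barrier: a set of edges of the square lattice whose removal
(keeping the end-vertices) separates `ℤ²` into two or more connected
components, exactly one of which is infinite. -/
def IsBarrier (E : Set (V × V)) : Prop :=
  (∀ e ∈ E, SqAdj e.1 e.2) ∧
  (∃ v, {w | AvoidConn E v w}.Infinite) ∧
  (∀ v w, {x | AvoidConn E v x}.Infinite → {x | AvoidConn E w x}.Infinite → AvoidConn E v w) ∧
  (∃ v, {w | AvoidConn E v w}.Finite)

/-- The exterior of a barrier: its unique infinite complementary component. -/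
def barrierExt (E : Set (V × V)) : Set V := {v | {w | AvoidConn E v w}.Infinite}

/-- The interior of a barrier: the union of the finite complementary components. -/
def barrierInt (E : Set (V × V)) : Set V := {v | {w | AvoidConn E v w}.Finite}

/-- The event `A ⊆ EdgeCfg` is increasing (opening edges preserves it). -/
def IncreasingEdgeEvent (A : Set EdgeCfg) : Prop :=
  ∀ η η' : EdgeCfg, (∀ a b : V, η a b = true → η' a b = true) → η ∈ A → η' ∈ A

/-- The event `A ⊆ EdgeCfg` depends only on the states of the edges both of
whose endpoints lie in `W`. -/
def DependsOnEdgesIn (A : Set EdgeCfg) (W : Set V) : Prop :=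
  ∀ η η' : EdgeCfg, (∀ a b : V, a ∈ W → b ∈ W → η a b = η' a b) → (η ∈ A ↔ η' ∈ A)

/-! ### Translations -/

/-- Translation of configurations by the vector `u`. -/
def shift (u : V) (ω : Config) : Config :=
  (fun a b => ω.1 (a + u) (b + u), fun a => ω.2 (a + u))

end DaC

/-!
A black vertical crossing and a white horizontal `*`-crossing cannot coexist. Continue the
black crossing by one step below the rectangle. For a vertex `v` off this path, count mod 2 the
steps of the path that cross the vertical ray going down from `v - (1/2, 1/2)`, and add one if
the path ends to the left of `v`. A `*`-step between two vertices off the path moves the ray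
only across edges at these two vertices, so this parity is constant along a white `*`-path;
but it is `0` on the left side of the rectangle and `1` on the right side.

One of the two crossings exists. Colour the vertices outside the rectangle white in the columns
to the left and to the right of it and black in its own columns. An explorer walks through the
unit squares of the plane, always crossing an edge with a white end on its left and a black end
on its right, starting just below the lower left corner of the rectangle. Its step map is
injective on such states, and the state preceding the start lies below a finite box around the
rectangle, so the walk cannot stay in that box. If it leaves through the top, the black vertices
on its right connect the bottom strip to the top strip; otherwise it leaves at the bottom right,
and the white vertices on its left connect the left strip to the right strip. The part of this
path inside the rectangle is the crossing.
-/

theorem Int.sq_add_sq_eq_one_iff {a b : ℤ} :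
    a ^ 2 + b ^ 2 = 1 ↔ (a = 0 ∧ (b = 1 ∨ b = -1)) ∨ (b = 0 ∧ (a = 1 ∨ a = -1)) := by
  constructor
  · intro h
    have ha : -1 ≤ a ∧ a ≤ 1 := by constructor <;> nlinarith [sq_nonneg b]
    have hb : -1 ≤ b ∧ b ≤ 1 := by constructor <;> nlinarith [sq_nonneg a]
    obtain ⟨ha1, ha2⟩ := ha
    obtain ⟨hb1, hb2⟩ := hb
    interval_cases a <;> interval_cases b <;> simp_all
  · rintro (⟨rfl, rfl | rfl⟩ | ⟨rfl, rfl | rfl⟩) <;> norm_num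

theorem Int.sq_add_sq_eq_one_or_two_iff {a b : ℤ} :
    (a ^ 2 + b ^ 2 = 1 ∨ a ^ 2 + b ^ 2 = 2) ↔
      -1 ≤ a ∧ a ≤ 1 ∧ -1 ≤ b ∧ b ≤ 1 ∧ ¬(a = 0 ∧ b = 0) := by
  constructor
  · intro h
    have : a ^ 2 + b ^ 2 ≤ 2 := by omega
    refine ⟨by nlinarith [sq_nonneg b], by nlinarith [sq_nonneg b], by nlinarith [sq_nonneg a],
      by nlinarith [sq_nonneg a], ?_⟩
    rintro ⟨rfl, rfl⟩
    norm_num at h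
  · rintro ⟨ha1, ha2, hb1, hb2, h0⟩
    interval_cases a <;> interval_cases b <;> simp_all

theorem Relation.ReflTransGen.exists_segment_Icc {α : Type*} {r : α → α → Prop} {π : α → ℤ}
    (hπ : ∀ a b, r a b → π b ≤ π a + 1) {c : ℤ} (hc : 0 ≤ c) {a b : α}
    (hab : ReflTransGen r a b) (ha : π a < 0) (hb : c < π b) :
    ∃ w u v, r w u ∧ π u = 0 ∧ π v = c ∧
      ReflTransGen (fun x y => r x y ∧ π y ∈ Set.Icc 0 c) u v := by
  suffices π b < 0 ∨
      (∃ w u, r w u ∧ π u = 0 ∧ π b ∈ Set.Icc 0 c ∧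
        ReflTransGen (fun x y => r x y ∧ π y ∈ Set.Icc 0 c) u b) ∨
      ∃ w u v, r w u ∧ π u = 0 ∧ π v = c ∧
        ReflTransGen (fun x y => r x y ∧ π y ∈ Set.Icc 0 c) u v by
    rcases this with h | ⟨-, -, -, -, h, -⟩ | h
    · omega
    · exact absurd h.2 (by omega)
    · exact h
  clear hb
  induction hab with
  | refl => exact .inl ha
  | @tail x y _ hxy ih =>
    have hy := hπ x y hxy
    rcases ih with hx | ⟨w, u, hwu, hu, hx, hux⟩ | done
    · by_cases hy0 : π y < 0
      · exact .inl hy0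
      · exact .inr (.inl ⟨x, y, hxy, by omega, Set.mem_Icc.2 ⟨by omega, by omega⟩, .refl⟩)
    · by_cases hyc : π y ∈ Set.Icc 0 c
      · exact .inr (.inl ⟨w, u, hwu, hu, hyc, hux.tail ⟨hxy, hyc⟩⟩)
      · by_cases hy0 : π y < 0
        · exact .inl hy0
        · rw [Set.mem_Icc] at hx hyc
          exact .inr (.inr ⟨w, u, x, hwu, hu, by omega, hux⟩)
    · exact .inr (.inr done)

theorem Relation.ReflTransGen.of_and_right {α : Type*} {r : α → α → Prop} {p : α → Prop}
    {a b : α} (h : ReflTransGen (fun x y => r x y ∧ p y) a b) (ha : p a) : p b := by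
  induction h with
  | refl => exact ha
  | tail _ hbc _ => exact hbc.2

theorem Set.Finite.exists_iterate_notMem {α : Type*} {f : α → α} {S B : Set α}
    (hB : (B ∩ S).Finite) (hmaps : MapsTo f S S) (hinj : InjOn f S) {x y : α}
    (hx : x ∈ S) (hy : y ∈ S) (hyx : f y = x) (hyB : y ∉ B) : ∃ j, f^[j] x ∉ B := by
  by_contra! hall
  obtain ⟨i, j, hij, hfij⟩ := hB.exists_lt_map_eq_of_forall_mem (f := fun j => f^[j] x)
    fun j => mem_inter (hall j) (hmaps.iterate j hx)
  obtain ⟨d, rfl⟩ := Nat.exists_eq_add_of_lt hij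
  have hxd : x = f^[d + 1] x := by
    refine hinj.iterate hmaps (n := i) hx (hmaps.iterate _ hx) ?_
    rw [← Function.iterate_add_apply]
    convert hfij using 2
    omega
  rw [Function.iterate_succ_apply', ← hyx] at hxd
  have : y = f^[d] (f y) := hinj hy (hmaps.iterate d (hyx ▸ hx)) hxd
  exact hyB (this ▸ hyx ▸ hall d)

namespace DaC

theorem sqAdj_iff {u v : V} :
    SqAdj u v ↔ (u.1 = v.1 ∧ (u.2 = v.2 + 1 ∨ u.2 = v.2 - 1)) ∨
      (u.2 = v.2 ∧ (u.1 = v.1 + 1 ∨ u.1 = v.1 - 1)) := by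
  rw [SqAdj, Int.sq_add_sq_eq_one_iff]
  omega

theorem sqAdj_comm {u v : V} : SqAdj u v ↔ SqAdj v u := by
  simp only [sqAdj_iff]
  omega

theorem starAdj_iff {u v : V} :
    StarAdj u v ↔ v.1 - 1 ≤ u.1 ∧ u.1 ≤ v.1 + 1 ∧ v.2 - 1 ≤ u.2 ∧ u.2 ≤ v.2 + 1 ∧
      ¬(u.1 = v.1 ∧ u.2 = v.2) := by
  rw [StarAdj, Int.sq_add_sq_eq_one_or_two_iff]
  omega

theorem hasCrossing_of_reflTransGen {adj : V → V → Prop} {good : V → Prop} {R A B : Set V}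
    {u v : V} (h : Relation.ReflTransGen (fun a b => adj a b ∧ b ∈ R ∧ good b) u v)
    (hu : u ∈ R ∧ good u) (huA : u ∈ A) (hvB : v ∈ B) : HasCrossing adj good R A B := by
  obtain ⟨k, f, hf, hadj, rfl, rfl⟩ : ∃ (k : ℕ) (f : Fin (k + 1) → V),
      (∀ i, f i ∈ R ∧ good (f i)) ∧ (∀ i : Fin k, adj (f i.castSucc) (f i.succ)) ∧
        f 0 = u ∧ f (Fin.last k) = v := by
    clear hvB
    induction h with
    | refl => exact ⟨0, fun _ => u, fun _ => hu, Fin.elim0, rfl, rfl⟩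
    | @tail b c _ hbc ih =>
      obtain ⟨k, f, hf, hadj, hf0, hfk⟩ := ih
      refine ⟨k + 1, Fin.snoc f c, Fin.lastCases (by simpa using hbc.2) (by simpa using hf),
        Fin.lastCases (by simpa [hfk] using hbc.1) fun i => ?_, by simpa using hf0, by simp⟩
      rw [Fin.succ_castSucc, Fin.snoc_castSucc, Fin.snoc_castSucc]
      exact hadj i
  exact ⟨k, f, hf, hadj, huA, hvB⟩

/-- Whether the step `a → b` crosses the vertical ray going down from `(v.1 - 1/2, v.2 - 1/2)`. -/
def crossesBelow (v a b : V) : ZMod 2 :=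
  if a.2 = b.2 ∧ a.2 < v.2 ∧ (a.1 = v.1 - 1 ∧ b.1 = v.1 ∨ a.1 = v.1 ∧ b.1 = v.1 - 1) then 1 else 0

theorem crossesBelow_add_crossesBelow_right {v a b : V} (hab : SqAdj a b) :
    crossesBelow v a b + crossesBelow (v.1 + 1, v.2) a b =
      (if a.1 = v.1 ∧ a.2 < v.2 then 1 else 0) + (if b.1 = v.1 ∧ b.2 < v.2 then 1 else 0) +
        if s(a, b) = s((v.1, v.2 - 1), v) then 1 else 0 := by
  rw [sqAdj_iff] at hab
  simp only [crossesBelow, Sym2.eq_iff, Prod.ext_iff] at hab ⊢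
  split_ifs <;> first | decide | omega

theorem crossesBelow_up (x y : ℤ) (a b : V) :
    crossesBelow (x, y + 1) a b =
      crossesBelow (x, y) a b + if s(a, b) = s((x - 1, y), (x, y)) then 1 else 0 := by
  simp only [crossesBelow, Sym2.eq_iff, Prod.ext_iff]
  split_ifs <;> first | decide | omega

def rayParity (F : ℕ → V) (T : ℕ) (v : V) : ZMod 2 :=
  ∑ t ∈ Finset.range T, crossesBelow v (F t) (F (t + 1))

def sideParity (F : ℕ → V) (T : ℕ) (v : V) : ZMod 2 :=
  rayParity F T v + if (F T).1 < v.1 then 1 else 0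

section SideParity

variable {F : ℕ → V} {T : ℕ}

theorem sideParity_right (hF : ∀ t < T, SqAdj (F t) (F (t + 1))) {x y : ℤ}
    (hT : (F T).2 < y) (h0 : y ≤ (F 0).2)
    (he : ∀ t < T, s(F t, F (t + 1)) ≠ s((x, y - 1), (x, y))) :
    sideParity F T (x + 1, y) = sideParity F T (x, y) := by
  set g : ℕ → ZMod 2 := fun t => if (F t).1 = x ∧ (F t).2 < y then 1 else 0
  have hsum : rayParity F T (x, y) + rayParity F T (x + 1, y) = g T - g 0 := by
    rw [rayParity, rayParity, ← Finset.sum_add_distrib, ← Finset.sum_range_sub]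
    refine Finset.sum_congr rfl fun t ht => ?_
    rw [crossesBelow_add_crossesBelow_right (hF t (Finset.mem_range.1 ht)),
      if_neg (he t (Finset.mem_range.1 ht)), add_zero, CharTwo.sub_eq_add, add_comm]
  have hg0 : g 0 = 0 := if_neg (by omega)
  rw [hg0, sub_zero, CharTwo.add_eq_iff_eq_add] at hsum
  rw [sideParity, sideParity, hsum]
  rcases lt_trichotomy (F T).1 x with h | h | h
  · simp [g, h, h.le, h.ne]
  · simp [g, h, hT, add_comm]
  · simp [g, h.ne', h.not_gt, h.not_ge]

theorem sideParity_up {x y : ℤ} (he : ∀ t < T, s(F t, F (t + 1)) ≠ s((x - 1, y), (x, y))) :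
    sideParity F T (x, y + 1) = sideParity F T (x, y) := by
  rw [sideParity, sideParity, rayParity, rayParity]
  congr 1
  refine Finset.sum_congr rfl fun t ht => ?_
  rw [crossesBelow_up, if_neg (he t (Finset.mem_range.1 ht)), add_zero]

theorem sideParity_eq_zero_of_forall_le {v : V} (h : ∀ t ≤ T, v.1 ≤ (F t).1) :
    sideParity F T v = 0 := by
  rw [sideParity, rayParity, if_neg (not_lt.2 (h T le_rfl)), add_zero]
  refine Finset.sum_eq_zero fun t ht => if_neg ?_
  have := h t (by simp at ht; omega)
  have := h (t + 1) (by simp at ht; omega)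
  omega

theorem sideParity_eq_one_of_forall_lt {v : V} (h : ∀ t ≤ T, (F t).1 < v.1) :
    sideParity F T v = 1 := by
  rw [sideParity, rayParity, if_pos (h T le_rfl), Finset.sum_eq_zero, zero_add]
  refine fun t ht => if_neg ?_
  have := h t (by simp at ht; omega)
  have := h (t + 1) (by simp at ht; omega)
  omega

theorem edge_ne_of_forall_ne {u : V} {e : Sym2 V} (hu : ∀ t ≤ T, F t ≠ u) (he : u ∈ e) :
    ∀ t < T, s(F t, F (t + 1)) ≠ e := by
  rintro t ht rfl
  rcases Sym2.mem_iff.1 he with h | h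
  exacts [hu t ht.le h.symm, hu (t + 1) ht h.symm]

theorem sideParity_eq_of_forward (hF : ∀ t < T, SqAdj (F t) (F (t + 1))) {x y : ℤ} {w : V}
    (hy : (F T).2 < y ∧ y ≤ (F 0).2) (hu : ∀ t ≤ T, F t ≠ (x, y)) (hw : ∀ t ≤ T, F t ≠ w)
    (hxw : w = (x + 1, y) ∨ w = (x, y + 1) ∨ w = (x + 1, y + 1) ∨ w = (x + 1, y - 1)) :
    sideParity F T w = sideParity F T (x, y) := by
  have right := sideParity_right hF hy.1 hy.2 (edge_ne_of_forall_ne hu (Sym2.mem_mk_right _ _))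
  rcases hxw with rfl | rfl | rfl | rfl
  · exact right
  · exact sideParity_up (edge_ne_of_forall_ne hu (Sym2.mem_mk_right _ _))
  · rw [sideParity_up (edge_ne_of_forall_ne hu (by simp)), right]
  · rw [← sideParity_up (edge_ne_of_forall_ne hw (Sym2.mem_mk_right _ _)), sub_add_cancel, right]

theorem sideParity_eq_of_starAdj (hF : ∀ t < T, SqAdj (F t) (F (t + 1))) {u w : V}
    (huw : StarAdj u w) (hu : (F T).2 < u.2 ∧ u.2 ≤ (F 0).2) (hw : (F T).2 < w.2 ∧ w.2 ≤ (F 0).2)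
    (hFu : ∀ t ≤ T, F t ≠ u) (hFw : ∀ t ≤ T, F t ≠ w) :
    sideParity F T u = sideParity F T w := by
  rw [starAdj_iff] at huw
  have : (w = (u.1 + 1, u.2) ∨ w = (u.1, u.2 + 1) ∨ w = (u.1 + 1, u.2 + 1) ∨
      w = (u.1 + 1, u.2 - 1)) ∨ (u = (w.1 + 1, w.2) ∨ u = (w.1, w.2 + 1) ∨
      u = (w.1 + 1, w.2 + 1) ∨ u = (w.1 + 1, w.2 - 1)) := by
    simp only [Prod.ext_iff]
    omega
  rcases this with h | h
  exacts [(sideParity_eq_of_forward hF hu hFu hFw h).symm, sideParity_eq_of_forward hF hw hFw hFu h]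

end SideParity

theorem notMem_horizWStarC_of_blockingPath {n m : ℕ} {ξ : ColourCfg} {F : ℕ → V} {T : ℕ}
    (hF : ∀ t < T, SqAdj (F t) (F (t + 1))) (hT : (F T).2 < 0) (h0 : (m : ℤ) ≤ (F 0).2)
    (hcol : ∀ t ≤ T, 0 ≤ (F t).1 ∧ (F t).1 ≤ n)
    (hblack : ∀ t ≤ T, F t ∈ Rect n m → ξ (F t) = true) :
    ξ ∉ HorizWStarC n m := by
  rintro ⟨l, g, hg, hgadj, hg0, hgl⟩
  have hrow : ∀ i, (F T).2 < (g i).2 ∧ (g i).2 ≤ (F 0).2 := fun i => by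
    have := (hg i).1.2.2
    omega
  have hFg : ∀ i, ∀ t ≤ T, F t ≠ g i := fun i t ht he => by
    simpa [he, (hg i).2] using hblack t ht (he ▸ (hg i).1)
  have hparity : ∀ i, sideParity F T (g i) = 0 :=
    Fin.induction (sideParity_eq_zero_of_forall_le fun t ht => hg0.2 ▸ (hcol t ht).1)
      fun i hi =>
        (sideParity_eq_of_starAdj hF (hgadj i) (hrow _) (hrow _) (hFg _) (hFg _)).symm.trans hi
  have hlast := hparity (Fin.last l)
  rw [← sideParity_right hF (hrow _).1 (hrow _).2
      (edge_ne_of_forall_ne (hFg _) (Sym2.mem_mk_right _ _)),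
    sideParity_eq_one_of_forall_lt fun t ht => by have := (hcol t ht).2; simp [hgl.2]; omega]
    at hlast
  exact one_ne_zero hlast

theorem notMem_horizWStarC_of_mem_vertBC {n m : ℕ} {ξ : ColourCfg}
    (h : ξ ∈ VertBC SqAdj n m) : ξ ∉ HorizWStarC n m := by
  obtain ⟨k, f, hf, hadj, htop, hbot⟩ := h
  set F : ℕ → V := fun t => if h : t ≤ k then f ⟨t, by omega⟩ else ((f (Fin.last k)).1, -1)
  have hFf : ∀ t (ht : t ≤ k), F t = f ⟨t, by omega⟩ := fun t ht => dif_pos ht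
  have hFk : F (k + 1) = ((f (Fin.last k)).1, -1) := dif_neg (by omega)
  have hFcases : ∀ t ≤ k + 1, (∃ i, F t = f i) ∨ F t = ((f (Fin.last k)).1, -1) := fun t ht => by
    rcases Nat.lt_or_ge t (k + 1) with htk | htk
    · exact .inl ⟨_, hFf t (by omega)⟩
    · exact .inr (by rw [show t = k + 1 by omega, hFk])
  refine notMem_horizWStarC_of_blockingPath (F := F) (T := k + 1) (fun t ht => ?_) (by simp [hFk])
    (by rw [hFf 0 (Nat.zero_le _)]; exact htop.2.ge) (fun t ht => ?_) (fun t ht => ?_)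
  · rcases Nat.lt_or_ge t k with htk | htk
    · rw [hFf t htk.le, hFf (t + 1) htk]
      exact hadj ⟨t, htk⟩
    · obtain rfl : t = k := by omega
      rw [show F t = f (Fin.last t) from hFf t le_rfl, hFk, sqAdj_iff, hbot.2]
      omega
  · rcases hFcases t ht with ⟨i, hi⟩ | hi <;> rw [hi]
    exacts [⟨(hf i).1.1, (hf i).1.2.1⟩, ⟨(hf _).1.1, (hf _).1.2.1⟩]
  · rcases hFcases t ht with ⟨i, hi⟩ | hi <;> rw [hi]
    exacts [fun _ => (hf i).2, fun h => absurd h.2.2.1 (by norm_num)]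

inductive Dir
  | north | east | south | west
  deriving DecidableEq

instance : Fintype Dir := ⟨{.north, .east, .south, .west}, fun d => by cases d <;> simp⟩

namespace Dir

def cw : Dir → Dir
  | north => east | east => south | south => west | west => north

def ccw : Dir → Dir
  | north => west | east => north | south => east | west => south

def vec : Dir → V
  | north => (0, 1) | east => (1, 0) | south => (0, -1) | west => (-1, 0)

/-- The rear left corner of the unit square `[0, 1]²` for a walker heading `d` through it;
clockwise from there come `d.cw.rearLeft`, `d.cw.cw.rearLeft` and `d.ccw.rearLeft`. -/
def rearLeft : Dir → V
  | north => (0, 0) | east => (0, 1) | south => (1, 1) | west => (1, 0)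

@[simp] theorem cw_ccw (d : Dir) : d.ccw.cw = d := by cases d <;> rfl

@[simp] theorem ccw_cw (d : Dir) : d.cw.ccw = d := by cases d <;> rfl

theorem cw_cw_cw (d : Dir) : d.cw.cw.cw = d.ccw := by cases d <;> rfl

theorem ccw_ccw (d : Dir) : d.ccw.ccw = d.cw.cw := by cases d <;> rfl

theorem vec_add_rearLeft (d : Dir) : d.vec + d.rearLeft = d.cw.rearLeft := by cases d <;> rfl

theorem sqAdj_rearLeft_cw (p : V) (d : Dir) : SqAdj (p + d.rearLeft) (p + d.cw.rearLeft) := by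
  cases d <;> simp [sqAdj_iff, rearLeft, cw]

theorem sqAdj_rearLeft_ccw (p : V) (d : Dir) : SqAdj (p + d.rearLeft) (p + d.ccw.rearLeft) := by
  simpa [sqAdj_comm] using sqAdj_rearLeft_cw p d.ccw

theorem starAdj_rearLeft_cw_cw (p : V) (d : Dir) :
    StarAdj (p + d.rearLeft) (p + d.cw.cw.rearLeft) := by
  cases d <;> simp [starAdj_iff, rearLeft, cw] <;> omega

end Dir

/-- An explorer in the unit square with lower left corner `pos`, which it entered heading `dir`
across the edge between the lattice vertices `left` and `right`. -/
structure Explorer where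
  pos : V
  dir : Dir

namespace Explorer

variable (χ : ColourCfg) (s : Explorer)

def left : V := s.pos + s.dir.rearLeft

def right : V := s.pos + s.dir.ccw.rearLeft

def frontLeft : V := s.pos + s.dir.cw.rearLeft

def frontRight : V := s.pos + s.dir.cw.cw.rearLeft

def move (d : Dir) : Explorer := ⟨s.pos + d.vec, d⟩

def step : Explorer :=
  if χ s.frontRight = false then s.move s.dir.cw
  else if χ s.frontLeft = false then s.move s.dir
  else s.move s.dir.ccw

def stepBack : Explorer :=
  let p := s.pos - s.dir.vec
  ⟨p, if χ (p + s.dir.ccw.rearLeft) = false then s.dir.ccw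
    else if χ (p + s.dir.rearLeft) = false then s.dir else s.dir.cw⟩

def IsValid : Prop := χ s.left = false ∧ χ s.right = true

def start : Explorer := ⟨(-1, -2), .north⟩

variable {χ s}

theorem left_move (d : Dir) : (s.move d).left = s.pos + d.cw.rearLeft := by
  rw [left, move, add_assoc, Dir.vec_add_rearLeft]

theorem right_move (d : Dir) : (s.move d).right = s.pos + d.cw.cw.rearLeft := by
  rw [right, move, ← Dir.vec_add_rearLeft d.cw, ← Dir.vec_add_rearLeft d]
  cases d <;> simp [Dir.vec, Dir.rearLeft, Dir.cw, Dir.ccw] <;> abel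

theorem pos_step : (s.step χ).pos = s.pos + (s.step χ).dir.vec := by
  unfold step
  split_ifs <;> rfl

theorem IsValid.step (h : s.IsValid χ) : (s.step χ).IsValid χ := by
  obtain ⟨hl, hr⟩ := h
  unfold Explorer.step
  split_ifs with h1 h2
  · exact ⟨by rw [left_move]; exact h1, by rw [right_move, Dir.cw_cw_cw]; exact hr⟩
  · exact ⟨by rw [left_move]; exact h2, by rw [right_move]; simpa [frontRight] using h1⟩
  · exact ⟨by rw [left_move, Dir.cw_ccw]; exact hl,
      by rw [right_move, Dir.cw_ccw]; simpa [frontLeft] using h2⟩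

theorem stepBack_step (h : s.IsValid χ) : (s.step χ).stepBack χ = s := by
  obtain ⟨hl, hr⟩ := h
  unfold step
  split_ifs with h1 h2 <;>
    simp_all [stepBack, move, left, right, frontLeft, frontRight, Dir.ccw_ccw]

theorem monoConn_left_step (h : s.IsValid χ) :
    MonoConn StarAdj χ false s.left (s.step χ).left := by
  unfold step
  split_ifs with h1 h2
  · rw [left_move]
    exact .single ⟨Dir.starAdj_rearLeft_cw_cw s.pos s.dir, h.1, h1⟩
  · rw [left_move]
    exact .single ⟨.inl (Dir.sqAdj_rearLeft_cw s.pos s.dir), h.1, h2⟩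
  · rw [left_move, Dir.cw_ccw]
    exact .refl

theorem monoConn_right_step (h : s.IsValid χ) :
    MonoConn SqAdj χ true s.right (s.step χ).right := by
  have hfr : SqAdj s.right s.frontRight := by
    simpa [right, frontRight, Dir.ccw_ccw] using Dir.sqAdj_rearLeft_ccw s.pos s.dir.ccw
  unfold step
  split_ifs with h1 h2
  · rw [right_move, Dir.cw_cw_cw]
    exact .refl
  · rw [right_move, Bool.not_eq_false] at *
    exact .single ⟨hfr, h.2, h1⟩
  · rw [right_move, Dir.cw_ccw, Bool.not_eq_false] at *
    refine .head ⟨hfr, h.2, h1⟩ (.single ⟨?_, h1, h2⟩)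
    simpa [frontRight] using Dir.sqAdj_rearLeft_ccw s.pos s.dir.cw.cw

theorem IsValid.iterate (h : s.IsValid χ) (j : ℕ) :
    ((Explorer.step χ)^[j] s).IsValid χ ∧
      MonoConn StarAdj χ false s.left ((Explorer.step χ)^[j] s).left ∧
      MonoConn SqAdj χ true s.right ((Explorer.step χ)^[j] s).right := by
  induction j with
  | zero => exact ⟨h, .refl, .refl⟩
  | succ j ih =>
    rw [Function.iterate_succ_apply']
    exact ⟨ih.1.step, ih.2.1.trans (monoConn_left_step ih.1),
      ih.2.2.trans (monoConn_right_step ih.1)⟩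

end Explorer

def frame (ξ : ColourCfg) (n m : ℕ) : ColourCfg := fun v =>
  if 0 ≤ v.1 ∧ v.1 ≤ n then (if 0 ≤ v.2 ∧ v.2 ≤ m then ξ v else true) else false

section Frame

variable {ξ : ColourCfg} {n m : ℕ} {v : V}

theorem frame_eq_false_of_fst_lt_zero (h : v.1 < 0) : frame ξ n m v = false := by
  simp [frame]
  omega

theorem frame_eq_true_of_snd_lt_zero (h0 : 0 ≤ v.1) (hn : v.1 ≤ n) (h : v.2 < 0) :
    frame ξ n m v = true := by
  simp [frame, h0, hn]
  omega

theorem fst_mem_of_frame_eq_true (h : frame ξ n m v = true) : 0 ≤ v.1 ∧ v.1 ≤ n := by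
  by_contra hv
  simp [frame, hv] at h

theorem mem_rect_of_frame_eq_true (h : frame ξ n m v = true) (h0 : 0 ≤ v.2) (hm : v.2 ≤ m) :
    v ∈ Rect n m ∧ ξ v = true := by
  obtain ⟨h1, h2⟩ := fst_mem_of_frame_eq_true h
  simp only [frame, h1, h2, h0, hm, and_self, if_true] at h
  exact ⟨⟨h1, h2, h0, hm⟩, h⟩

theorem mem_rect_of_frame_eq_false (h : frame ξ n m v = false) (h0 : 0 ≤ v.1) (hn : v.1 ≤ n) :
    v ∈ Rect n m ∧ ξ v = false := by
  by_cases hv : 0 ≤ v.2 ∧ v.2 ≤ m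
  · simp only [frame, h0, hn, hv, and_self, if_true] at h
    exact ⟨⟨h0, hn, hv⟩, h⟩
  · simp [frame, h0, hn, hv] at h

end Frame

theorem mem_vertBC_of_monoConn {ξ : ColourCfg} {n m : ℕ} {a b : V}
    (h : MonoConn SqAdj (frame ξ n m) true a b) (ha : a.2 < 0) (hb : m < b.2) :
    ξ ∈ VertBC SqAdj n m := by
  obtain ⟨w, u, v, hwu, hu, hv, huv⟩ := (Relation.reflTransGen_swap.2 h).exists_segment_Icc
    (π := fun x => m - x.2) (fun x y hxy => by have := sqAdj_iff.1 hxy.1; omega)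
    (Nat.cast_nonneg m) (by omega) (by omega)
  have hgood : ∀ x, frame ξ n m x = true → (m : ℤ) - x.2 ∈ Set.Icc 0 (m : ℤ) →
      x ∈ Rect n m ∧ ξ x = true := fun x hx hπ =>
    mem_rect_of_frame_eq_true hx (by linarith [hπ.2]) (by linarith [hπ.1])
  have hu' := hgood u hwu.2.1 (by simp [hu])
  have huv' : Relation.ReflTransGen (fun x y => SqAdj x y ∧ y ∈ Rect n m ∧ ξ y = true) u v :=
    Relation.ReflTransGen.mono
      (fun x y hxy => ⟨sqAdj_comm.1 hxy.1.1, hgood y hxy.1.2.1 hxy.2⟩) _ _ huv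
  exact hasCrossing_of_reflTransGen huv' hu' ⟨hu'.1, by omega⟩
    ⟨(huv'.of_and_right hu').1, by omega⟩

theorem mem_horizWStarC_of_monoConn {ξ : ColourCfg} {n m : ℕ} {a b : V}
    (h : MonoConn StarAdj (frame ξ n m) false a b) (ha : a.1 < 0) (hb : n < b.1) :
    ξ ∈ HorizWStarC n m := by
  obtain ⟨w, u, v, hwu, hu, hv, huv⟩ := h.exists_segment_Icc (π := Prod.fst)
    (fun x y hxy => by have := starAdj_iff.1 hxy.1; omega) (Nat.cast_nonneg n) ha hb
  have hgood : ∀ x, frame ξ n m x = false → x.1 ∈ Set.Icc 0 (n : ℤ) →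
      x ∈ Rect n m ∧ ξ x = false := fun x hx hπ => mem_rect_of_frame_eq_false hx hπ.1 hπ.2
  have hu' := hgood u hwu.2.2 (by simp [hu])
  have huv' : Relation.ReflTransGen (fun x y => StarAdj x y ∧ y ∈ Rect n m ∧ ξ y = false) u v :=
    Relation.ReflTransGen.mono (fun x y hxy => ⟨hxy.1.1, hgood y hxy.1.2.2 hxy.2⟩) _ _ huv
  exact hasCrossing_of_reflTransGen huv' hu' ⟨hu'.1, hu⟩ ⟨(huv'.of_and_right hu').1, hv⟩

namespace Explorer

variable {ξ : ColourCfg} {n m : ℕ}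

theorem pos_fst_mem {s : Explorer} (h : s.IsValid (frame ξ n m)) : -1 ≤ s.pos.1 ∧ s.pos.1 ≤ n := by
  have := fst_mem_of_frame_eq_true h.2
  cases hd : s.dir <;> simp [right, hd, Dir.ccw, Dir.rearLeft] at this <;> omega

theorem start_isValid : start.IsValid (frame ξ n m) :=
  ⟨frame_eq_false_of_fst_lt_zero (by decide),
    frame_eq_true_of_snd_lt_zero (by decide) (by simp [start, right, Dir.ccw, Dir.rearLeft])
      (by decide)⟩

theorem exists_iterate_start_exit (ξ : ColourCfg) (n m : ℕ) :
    ∃ j, let s := (step (frame ξ n m))^[j] start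
      m + 2 < s.pos.2 ∨ (s.pos.2 < -2 ∧ s.dir = .south) := by
  set χ := frame ξ n m
  set orbit : ℕ → Explorer := fun j => (step χ)^[j] start
  set box : Set Explorer := {s | s.pos.2 ∈ Set.Icc (-2) ((m : ℤ) + 2)}
  set pred : Explorer := ⟨(-1, -3), .north⟩
  have hpred : pred.IsValid χ := ⟨frame_eq_false_of_fst_lt_zero (by decide),
    frame_eq_true_of_snd_lt_zero (by decide) (by simp [pred, right, Dir.ccw, Dir.rearLeft])
      (by decide)⟩
  have hpred_step : pred.step χ = start := by
    have h1 : χ pred.frontRight = true := frame_eq_true_of_snd_lt_zero (by decide)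
      (by simp [pred, frontRight, Dir.cw, Dir.rearLeft]) (by decide)
    have h2 : χ pred.frontLeft = false := frame_eq_false_of_fst_lt_zero (by decide)
    simp [step, h1, h2, move, pred, start, Dir.vec]
  have hfin : (box ∩ {s | s.IsValid χ}).Finite := by
    refine ((Set.finite_Icc ((-1 : ℤ), (-2 : ℤ)) ((n : ℤ), (m : ℤ) + 2)).image2 Explorer.mk
      Set.finite_univ).subset ?_
    rintro s ⟨hbox, hs⟩
    have := pos_fst_mem hs
    exact ⟨s.pos, ⟨⟨this.1, hbox.1⟩, ⟨this.2, hbox.2⟩⟩, s.dir, trivial, rfl⟩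
  obtain ⟨j, hj⟩ := hfin.exists_iterate_notMem (fun s hs => IsValid.step hs)
    (Set.LeftInvOn.injOn fun s hs => stepBack_step hs) start_isValid hpred hpred_step
    (by simp [box, pred])
  obtain ⟨k, hk, hk1⟩ : ∃ k, orbit k ∈ box ∧ orbit (k + 1) ∉ box := by
    by_contra! h
    exact hj (Nat.rec (by simp [box, start]; omega) (fun k hk => h k hk) j)
  refine ⟨k + 1, show (m : ℤ) + 2 < (orbit (k + 1)).pos.2 ∨
    ((orbit (k + 1)).pos.2 < -2 ∧ (orbit (k + 1)).dir = .south) from ?_⟩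
  have hpos : (orbit (k + 1)).pos.2 = (orbit k).pos.2 + (orbit (k + 1)).dir.vec.2 := by
    simp only [orbit, Function.iterate_succ_apply']
    rw [pos_step, Prod.snd_add]
  simp only [box, Set.mem_ofPred_eq, Set.mem_Icc] at hk hk1
  cases hd : (orbit (k + 1)).dir <;>
    simp only [hd, Dir.vec, reduceCtorEq, and_true, and_false, or_false] at hpos ⊢ <;> omega

end Explorer

theorem mem_vertBC_or_mem_horizWStarC (ξ : ColourCfg) (n m : ℕ) :
    ξ ∈ VertBC SqAdj n m ∨ ξ ∈ HorizWStarC n m := by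
  obtain ⟨j, hj⟩ := Explorer.exists_iterate_start_exit ξ n m
  obtain ⟨hs, hleft, hright⟩ := Explorer.start_isValid.iterate j
  set s := (Explorer.step (frame ξ n m))^[j] Explorer.start
  rcases hj with htop | ⟨hbot, hsouth⟩
  · refine .inl (mem_vertBC_of_monoConn hright (by decide) ?_)
    cases hd : s.dir <;> simp [Explorer.right, hd, Dir.ccw, Dir.rearLeft] <;> omega
  · refine .inr (mem_horizWStarC_of_monoConn hleft (by decide) ?_)
    have hr := fst_mem_of_frame_eq_true hs.2
    have hl := hs.1
    simp only [Explorer.right, Explorer.left, hsouth, Dir.ccw, Dir.rearLeft, Prod.fst_add]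
      at hr hl ⊢
    by_contra! hn
    rw [frame_eq_true_of_snd_lt_zero (by simp; omega) hn (by simp; omega)] at hl
    exact Bool.noConfusion hl

/-- Every colour configuration restricted to `S_{n,m}` contains either a black
vertical crossing or a white horizontal `*`-crossing, but never both; in
particular `V^b_{n,m} = (H^{w*}_{n,m})ᶜ`. -/
theorem vertB_xor_horizWStar (n m : ℕ) :
    (∀ ξ : ColourCfg, Xor' (ξ ∈ VertBC SqAdj n m) (ξ ∈ HorizWStarC n m)) ∧
    VertBC SqAdj n m = (HorizWStarC n m)ᶜ := by
  refine ⟨fun ξ => ?_, Set.ext fun ξ =>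
    ⟨notMem_horizWStarC_of_mem_vertBC, (mem_vertBC_or_mem_horizWStarC ξ n m).resolve_right⟩⟩
  rcases mem_vertBC_or_mem_horizWStarC ξ n m with h | h
  exacts [.inl ⟨h, notMem_horizWStarC_of_mem_vertBC h⟩,
    .inr ⟨h, fun h' => notMem_horizWStarC_of_mem_vertBC h' h⟩]

end DaC
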